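/- arXiv:1906.09753 — 5 statements merged into one kernel-verified Lean document; each statement's English description precedes it below -/
import Mathlib

section
/- Fix a positive integer n and let λ ∈ H(1,n) be a singular diagram with λ₁ − n = λ'_j + n − j for some 1 ≤ j ≤ n. Let r(λ) = |{r : j ≤ r ≤ n, λ'_r = λ'_j}|, and let λ^♯ be obtained from λ by deleting r(λ) boxes from the first row and one box from each of the columns j, j+1, …, j+r(λ)−1 (equivalently, deleting r(λ) boxes from the row of index λ'_j). Then λ^♯ is a well-defined partition lying in H(1,n). -/
/-- A partition: a weakly decreasing sequence of naturals indexed from 1 (value at 0 unused, set to 0). -/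
def IsPartition (P : ℕ → ℕ) : Prop :=
  P 0 = 0 ∧ ∀ i, 1 ≤ i → P (i + 1) ≤ P i

/-- The conjugate partition: `λ'_j = |{i : 1 ≤ i ≤ N, λ_i ≥ j}|`, `N` a bound for the rows. -/
def conj (P : ℕ → ℕ) (N : ℕ) (j : ℕ) : ℕ :=
  ((Finset.Icc 1 N).filter (fun i => j ≤ P i)).card

/-- `r(λ) = |{r : j ≤ r ≤ n, λ'_r = λ'_j}|`. -/
def rnum (n N : ℕ) (P : ℕ → ℕ) (j : ℕ) : ℕ :=
  ((Finset.Icc j n).filter (fun r => conj P N r = conj P N j)).card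

/-- `λ^♯`: delete `r` boxes from the first row and `r` boxes from the row of index `i₀`. -/
def sharp (P : ℕ → ℕ) (i₀ r : ℕ) : ℕ → ℕ :=
  Function.update (Function.update P i₀ (P i₀ - r)) 1
    (Function.update P i₀ (P i₀ - r) 1 - r)

lemma part_anti (P : ℕ → ℕ) (hP : IsPartition P) {a b : ℕ} (ha : 1 ≤ a) (hab : a ≤ b) :
    P b ≤ P a := by
  induction b with
  | zero => omega
  | succ b ih =>
    rcases Nat.eq_or_lt_of_le hab with h | h
    · exact h ▸ le_rfl
    · exact le_trans (hP.2 b (by omega)) (ih (by omega))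

lemma conj_anti (P : ℕ → ℕ) (N : ℕ) {s t : ℕ} (hst : s ≤ t) : conj P N t ≤ conj P N s := by
  apply Finset.card_le_card
  intro i hi
  simp only [Finset.mem_filter] at hi ⊢
  exact ⟨hi.1, le_trans hst hi.2⟩

lemma conj_ge (P : ℕ → ℕ) (hP : IsPartition P) (N j : ℕ)
    (h1 : 1 ≤ conj P N j) : j ≤ P (conj P N j) := by
  by_contra h
  push_neg at h
  have hsub : (Finset.Icc 1 N).filter (fun i => j ≤ P i) ⊆ Finset.Icc 1 (conj P N j - 1) := by
    intro i hi
    simp only [Finset.mem_filter, Finset.mem_Icc] at hi ⊢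
    refine ⟨hi.1.1, ?_⟩
    by_contra hc
    push_neg at hc
    have : P i ≤ P (conj P N j) := part_anti P hP h1 (by omega)
    omega
  have hcard := Finset.card_le_card hsub
  rw [Nat.card_Icc] at hcard
  have : conj P N j ≤ conj P N j - 1 + 1 - 1 := hcard
  omega

lemma conj_lt (P : ℕ → ℕ) (hP : IsPartition P) (N : ℕ) (hN : ∀ i, N < i → P i = 0)
    (j : ℕ) (hj : 1 ≤ j) : P (conj P N j + 1) < j := by
  by_contra h
  push_neg at h
  have hle : conj P N j + 1 ≤ N := by
    by_contra hc
    push_neg at hc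
    have := hN _ hc
    omega
  have hsub : Finset.Icc 1 (conj P N j + 1) ⊆ (Finset.Icc 1 N).filter (fun i => j ≤ P i) := by
    intro i hi
    simp only [Finset.mem_Icc] at hi
    simp only [Finset.mem_filter, Finset.mem_Icc]
    exact ⟨⟨hi.1, le_trans hi.2 hle⟩, le_trans h (part_anti P hP hi.1 hi.2)⟩
  have hcard := Finset.card_le_card hsub
  rw [Nat.card_Icc] at hcard
  have : conj P N j + 1 + 1 - 1 ≤ conj P N j := hcard
  omega

lemma rnum_pos (n N : ℕ) (P : ℕ → ℕ) (j : ℕ) (hjn : j ≤ n) : 1 ≤ rnum n N P j := by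
  have : j ∈ (Finset.Icc j n).filter (fun r => conj P N r = conj P N j) := by
    simp [Finset.mem_Icc, hjn]
  exact Finset.card_pos.mpr ⟨j, this⟩

lemma rnum_le (n N : ℕ) (P : ℕ → ℕ) (j : ℕ) (hjn : j ≤ n) : rnum n N P j + j ≤ n + 1 := by
  have hcard := Finset.card_le_card (Finset.filter_subset
    (fun r => conj P N r = conj P N j) (Finset.Icc j n))
  rw [Nat.card_Icc] at hcard
  have : rnum n N P j ≤ n + 1 - j := hcard
  omega

lemma conj_add_rnum (n N : ℕ) (P : ℕ → ℕ) (j : ℕ) (hjn : j ≤ n) :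
    conj P N (j + (rnum n N P j - 1)) = conj P N j := by
  have hr1 : 1 ≤ rnum n N P j := rnum_pos n N P j hjn
  rcases Nat.eq_or_lt_of_le hr1 with h1 | h2
  · simp [← h1]
  · by_contra h
    have hsub : (Finset.Icc j n).filter (fun t => conj P N t = conj P N j)
        ⊆ Finset.Icc j (j + (rnum n N P j - 1) - 1) := by
      intro t ht
      simp only [Finset.mem_filter, Finset.mem_Icc] at ht ⊢
      refine ⟨ht.1.1, ?_⟩
      by_contra hc
      push_neg at hc
      have hm1 : conj P N (j + (rnum n N P j - 1)) ≤ conj P N j := conj_anti P N (by omega)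
      have hm2 : conj P N t ≤ conj P N (j + (rnum n N P j - 1)) := conj_anti P N (by omega)
      omega
    have hcard := Finset.card_le_card hsub
    rw [Nat.card_Icc] at hcard
    have : rnum n N P j ≤ j + (rnum n N P j - 1) - 1 + 1 - j := hcard
    omega

/-- For a singular diagram `λ ∈ H(1,n)` with `λ₁ − n = λ'_j + n − j`, the diagram `λ^♯` is a
well-defined partition lying in `H(1,n)`. -/
theorem sharp_isPartition (n : ℕ) (hn : 1 ≤ n) (P : ℕ → ℕ) (hP : IsPartition P)
    (hH : P 2 ≤ n) (N : ℕ) (hN : ∀ i, N < i → P i = 0)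
    (j : ℕ) (hj : 1 ≤ j) (hjn : j ≤ n)
    (heq : (P 1 : ℤ) - (n : ℤ) = (conj P N j : ℤ) + (n : ℤ) - (j : ℤ)) :
    IsPartition (sharp P (conj P N j) (rnum n N P j)) ∧
      sharp P (conj P N j) (rnum n N P j) 2 ≤ n := by
  -- gather the key numeric facts, then generalize conj and rnum to opaque variables
  have hr1 : 1 ≤ rnum n N P j := rnum_pos n N P j hjn
  have hrn : rnum n N P j + j ≤ n + 1 := rnum_le n N P j hjn
  have hPi₀1 : P (conj P N j + 1) < j := conj_lt P hP N hN j hj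
  have hi₀1 : 1 ≤ conj P N j := by
    by_contra hc
    push_neg at hc
    have h0 : conj P N j = 0 := by omega
    rw [h0] at hPi₀1 heq
    have hA : (0:ℕ) + 1 = 1 := rfl
    rw [hA] at hPi₀1
    omega
  have hconj : conj P N (j + (rnum n N P j - 1)) = conj P N j := conj_add_rnum n N P j hjn
  have hPi₀ : j + (rnum n N P j - 1) ≤ P (conj P N j) := by
    have := conj_ge P hP N (j + (rnum n N P j - 1)) (by rw [hconj]; exact hi₀1)
    rwa [hconj] at this
  have h1 : P 1 + j = conj P N j + 2 * n := by omega
  clear heq hconj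
  obtain ⟨i₀, hi₀⟩ : ∃ k, conj P N j = k := ⟨_, rfl⟩
  obtain ⟨r, hr⟩ : ∃ k, rnum n N P j = k := ⟨_, rfl⟩
  simp only [hi₀, hr] at hr1 hrn hPi₀1 hi₀1 hPi₀ h1 ⊢
  -- explicit values of sharp
  have hQ1 : sharp P i₀ r 1 = (if i₀ = 1 then P 1 - r else P 1) - r := by
    rcases eq_or_ne i₀ 1 with hi | hi
    · simp [sharp, Function.update_apply, hi]
    · simp [sharp, Function.update_apply, hi, Ne.symm hi]
  have hQx : ∀ x, x ≠ 1 → x ≠ i₀ → sharp P i₀ r x = P x := by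
    intro x hx hxi
    simp [sharp, Function.update_apply, hx, hxi]
  have hQi : i₀ ≠ 1 → sharp P i₀ r i₀ = P i₀ - r := by
    intro hi
    simp only [sharp, Function.update_apply, if_neg hi]
    simp
  have h12 : P 2 ≤ P 1 := hP.2 1 le_rfl
  have hsharp2 : sharp P i₀ r 2 = if i₀ = 2 then P 2 - r else P 2 := by
    rcases eq_or_ne i₀ 2 with h2 | h2
    · rw [if_pos h2, ← h2, hQi (by omega)]
    · rw [if_neg h2, hQx 2 (by omega) (Ne.symm h2)]
  refine ⟨⟨?_, ?_⟩, ?_⟩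
  · rw [hQx 0 (by omega) (by omega), hP.1]
  · intro i hi
    rcases Nat.eq_or_lt_of_le hi with h | h
    · -- i = 1 : goal  sharp 2 ≤ sharp 1
      rw [← h]
      have e2 : (1:ℕ) + 1 = 2 := rfl
      rw [e2, hsharp2, hQ1]
      rcases eq_or_ne i₀ 1 with e1 | e1
      · -- goal: P 2 ≤ P 1 - r - r
        rw [if_neg (by omega : i₀ ≠ 2), if_pos e1]
        have hp2 : P 2 < j := by
          have := hPi₀1
          rw [e1] at this
          exact this
        omega
      · rw [if_neg e1]
        rcases eq_or_ne i₀ 2 with f2 | f2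
        · rw [if_pos f2]
          omega
        · rw [if_neg f2]
          have : 3 ≤ i₀ := by omega
          omega
    · -- i ≥ 2
      have hii : i ≠ 1 := by omega
      have hii1 : i + 1 ≠ 1 := by omega
      have hmono : P (i + 1) ≤ P i := hP.2 i (by omega)
      rcases eq_or_ne i i₀ with he | he
      · -- row i₀ and the one below
        have hi₀2 : 2 ≤ i₀ := by omega
        rw [he]
        rw [hQi (by omega), hQx (i₀ + 1) (by omega) (by omega)]
        omega
      · rcases eq_or_ne (i + 1) i₀ with he2 | he2
        · have hi₀3 : 3 ≤ i₀ := by omega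
          rw [he2, hQi (by omega), hQx i hii he]
          rw [← he2]
          omega
        · rw [hQx i hii he, hQx (i + 1) hii1 he2]
          exact hmono
  · rw [hsharp2]
    split_ifs <;> omega
end

section
/- Fix a positive integer n, let λ ∈ H(1,n) be singular with λ₁ − n = λ'_j + n − j, and let λ^♯ be as defined from λ. Then c̃_λ = c̃_{λ^♯}, where c̃_μ = Σ_{(i,j)∈μ} (2j − 2i + 1 − 2n). -/
/-- `c̃_λ = Σ_{(i,j)∈λ} (2j − 2i + 1 − 2n)`. -/
def ctilde (n : ℕ) (P : ℕ → ℕ) (N : ℕ) : ℤ :=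
  ∑ i ∈ Finset.Icc 1 N, ∑ j ∈ Finset.Icc 1 (P i),
    (2 * (j : ℤ) - 2 * (i : ℤ) + 1 - 2 * (n : ℤ))

open Finset Function

def rowContent (n i : ℕ) (L : ℤ) : ℤ := L * (L + 2 - 2 * i - 2 * n)

theorem sum_Icc_content (n i L : ℕ) :
    ∑ c ∈ Icc 1 L, (2 * (c : ℤ) - 2 * i + 1 - 2 * n) = rowContent n i L := by
  induction L with
  | zero => simp [rowContent]
  | succ L ih =>
    rw [sum_Icc_succ_top (by omega), ih, rowContent, rowContent]
    push_cast
    ring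

theorem ctilde_eq_sum_rowContent (n : ℕ) (P : ℕ → ℕ) (N : ℕ) :
    ctilde n P N = ∑ i ∈ Icc 1 N, rowContent n i (P i) :=
  sum_congr rfl fun i _ => sum_Icc_content n i (P i)

theorem ctilde_update_sub {n N i r : ℕ} (P : ℕ → ℕ) (hi : i ∈ Icc 1 N) (hr : r ≤ P i) :
    ctilde n (update P i (P i - r)) N
      = ctilde n P N - r * (2 * P i - r + 2 - 2 * i - 2 * n) := by
  rw [ctilde_eq_sum_rowContent, ctilde_eq_sum_rowContent, ← add_sum_erase _ _ hi,
    ← add_sum_erase _ _ hi, update_self, Nat.cast_sub hr,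
    sum_congr rfl fun k hk => by rw [update_of_ne (ne_of_mem_erase hk)]]
  simp only [rowContent]
  ring

theorem ctilde_sharp_eq {n N i₀ r : ℕ} (P : ℕ → ℕ) (hi₀ : i₀ ∈ Icc 1 N) (hr : r ≤ P i₀)
    (hr₁ : r ≤ update P i₀ (P i₀ - r) 1) :
    ctilde n (sharp P i₀ r) N
      = ctilde n P N - r * (2 * P i₀ - r + 2 - 2 * i₀ - 2 * n)
        - r * (2 * update P i₀ (P i₀ - r) 1 - r - 2 * n) := by
  have h₁ : 1 ∈ Icc 1 N := mem_Icc.2 ⟨le_rfl, (mem_Icc.1 hi₀).1.trans (mem_Icc.1 hi₀).2⟩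
  rw [sharp, ctilde_update_sub _ h₁ hr₁, ctilde_update_sub _ hi₀ hr]
  push_cast
  ring

section Conjugate

variable {P : ℕ → ℕ} {N : ℕ}

theorem IsPartition.antitoneOn (hP : IsPartition P) : AntitoneOn P {i | 1 ≤ i} :=
  antitoneOn_nat_Ici_of_succ_le hP.2

theorem conj_le (P : ℕ → ℕ) (N s : ℕ) : conj P N s ≤ N :=
  (card_filter_le _ _).trans (Nat.card_Icc 1 N).le

theorem le_conj_iff (hP : IsPartition P) (hN : ∀ i, N < i → P i = 0) {s i : ℕ} (hs : 1 ≤ s)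
    (hi : 1 ≤ i) : i ≤ conj P N s ↔ s ≤ P i := by
  constructor
  · intro hle
    by_contra! hlt
    have hsub : (Icc 1 N).filter (fun k => s ≤ P k) ⊆ Icc 1 (i - 1) := by
      intro k hk
      simp only [mem_filter, mem_Icc] at hk ⊢
      refine ⟨hk.1.1, ?_⟩
      by_contra! hik
      have := hP.antitoneOn (show 1 ≤ i from hi) (show 1 ≤ k from hk.1.1) (by omega)
      omega
    have := card_le_card hsub
    rw [Nat.card_Icc] at this
    exact absurd (hle.trans this) (by omega)
  · intro hle
    have hiN : i ≤ N := by
      by_contra! hNi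
      have := hN i hNi
      omega
    have hsub : Icc 1 i ⊆ (Icc 1 N).filter (fun k => s ≤ P k) := by
      intro k hk
      rw [mem_Icc] at hk
      exact mem_filter.2 ⟨mem_Icc.2 ⟨hk.1, hk.2.trans hiN⟩,
        hle.trans (hP.antitoneOn (show 1 ≤ k from hk.1) (show 1 ≤ i from hi) hk.2)⟩
    simpa [conj] using card_le_card hsub

theorem conj_eq_iff (hP : IsPartition P) (hN : ∀ i, N < i → P i = 0) {s i : ℕ} (hs : 1 ≤ s)
    (hi : 1 ≤ i) : conj P N s = i ↔ s ≤ P i ∧ P (i + 1) < s := by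
  rw [← le_conj_iff hP hN hs hi, ← not_le, ← le_conj_iff hP hN hs (by omega)]
  omega

theorem rnum_eq (hP : IsPartition P) (hN : ∀ i, N < i → P i = 0) {n j : ℕ} (hj : 1 ≤ j)
    (hjP : j ≤ P 1) : rnum n N P j = min n (P (conj P N j)) + 1 - j := by
  have hi₀ : 1 ≤ conj P N j := (le_conj_iff hP hN hj le_rfl).2 hjP
  obtain ⟨-, hlt⟩ := (conj_eq_iff hP hN hj hi₀).1 rfl
  have hfilter : (Icc j n).filter (fun s => conj P N s = conj P N j)
      = Icc j (min n (P (conj P N j))) := by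
    ext s
    simp only [mem_filter, mem_Icc, le_min_iff]
    constructor
    · rintro ⟨⟨hjs, hsn⟩, hs⟩
      exact ⟨hjs, hsn, ((conj_eq_iff hP hN (hj.trans hjs) hi₀).1 hs).1⟩
    · rintro ⟨hjs, hsn, hsP⟩
      exact ⟨⟨hjs, hsn⟩, (conj_eq_iff hP hN (hj.trans hjs) hi₀).2 ⟨hsP, by omega⟩⟩
  rw [rnum, hfilter, Nat.card_Icc]

end Conjugate

theorem ctilde_sharp_general (n : ℕ) (P : ℕ → ℕ) (hP : IsPartition P)
    (hH : P 2 ≤ n) (N : ℕ) (hN : ∀ i, N < i → P i = 0)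
    (j : ℕ) (hj : 1 ≤ j) (hjn : j ≤ n)
    (heq : (P 1 : ℤ) - (n : ℤ) = (conj P N j : ℤ) + (n : ℤ) - (j : ℤ)) :
    ctilde n P N = ctilde n (sharp P (conj P N j) (rnum n N P j)) N := by
  have hjP : j ≤ P 1 := by omega
  have hr := rnum_eq (n := n) hP hN hj hjP
  set i₀ := conj P N j
  set r := rnum n N P j
  have hi₀1 : 1 ≤ i₀ := (le_conj_iff hP hN hj le_rfl).2 hjP
  have hi₀ : i₀ ∈ Icc 1 N := mem_Icc.2 ⟨hi₀1, conj_le P N j⟩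
  obtain ⟨hjPi₀, -⟩ := (conj_eq_iff hP hN hj hi₀1).1 rfl
  rcases eq_or_ne i₀ 1 with h | h
  · have hr' : (r : ℤ) = n + 1 - j := by rw [hr, h]; omega
    have hQ : update P i₀ (P i₀ - r) 1 = P 1 - r := by rw [h, update_self]
    rw [ctilde_sharp_eq P hi₀ (by omega) (by omega), hQ, h, Nat.cast_sub (by omega)]
    push_cast [h] at heq ⊢
    linear_combination (4 * (r : ℤ)) * heq - 4 * (r : ℤ) * hr'
  · have hPi₀ : P i₀ ≤ n :=
      (hP.antitoneOn (show 1 ≤ 2 by omega) hi₀1 (by omega)).trans hH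
    have hr' : (r : ℤ) = P i₀ + 1 - j := by omega
    rw [ctilde_sharp_eq P hi₀ (by omega) (by rw [update_of_ne (Ne.symm h)]; omega),
      update_of_ne (Ne.symm h)]
    linear_combination (2 * (r : ℤ)) * heq - 2 * (r : ℤ) * hr'

/-- For a singular diagram `λ ∈ H(1,n)` with `λ₁ − n = λ'_j + n − j`, one has `c̃_λ = c̃_{λ^♯}`. -/
theorem ctilde_sharp (n : ℕ) (hn : 1 ≤ n) (P : ℕ → ℕ) (hP : IsPartition P)
    (hH : P 2 ≤ n) (N : ℕ) (hN : ∀ i, N < i → P i = 0)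
    (j : ℕ) (hj : 1 ≤ j) (hjn : j ≤ n)
    (heq : (P 1 : ℤ) - (n : ℤ) = (conj P N j : ℤ) + (n : ℤ) - (j : ℤ)) :
    ctilde n P N = ctilde n (sharp P (conj P N j) (rnum n N P j)) N :=
  ctilde_sharp_general n P hP hH N hN j hj hjn heq
end

section
/- Fix a positive integer n and let λ ∈ H(1,n) be a singular diagram with λ₁ − n = λ'_j + n − j. Define X_λ = {λ, λ^♯, (λ^♯)^♯, …}, iterating the ♯-operation as long as the result is singular, and including the final regular diagram. Then X_λ has exactly λ'_j + 1 elements. -/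
/-- `λ` is singular: `λ₁ − n = λ'_j + n − j` for some `1 ≤ j ≤ n`. -/
def Singular (n N : ℕ) (P : ℕ → ℕ) : Prop :=
  ∃ j, 1 ≤ j ∧ j ≤ n ∧ (P 1 : ℤ) - (n : ℤ) = (conj P N j : ℤ) + (n : ℤ) - (j : ℤ)

open Classical in
/-- The `♯`-operation: on a singular diagram it produces `λ^♯`, on a regular diagram it is the
identity. -/
noncomputable def sharpOp (n N : ℕ) (P : ℕ → ℕ) : ℕ → ℕ :=
  if h : Singular n N P then
    sharp P (conj P N h.choose) (rnum n N P h.choose)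
  else P

lemma part_mono {P : ℕ → ℕ} (hP : IsPartition P) {a b : ℕ} (ha : 1 ≤ a) (hab : a ≤ b) :
    P b ≤ P a := by
  induction b, hab using Nat.le_induction with
  | base => exact le_refl _
  | succ b hb ih => exact le_trans (hP.2 b (le_trans ha hb)) ih

lemma filter_down {a b : ℕ} (ha : 1 ≤ a) (p : ℕ → Prop) [DecidablePred p]
    (hdc : ∀ x y, a ≤ x → x ≤ y → y ≤ b → p y → p x)
    {x : ℕ} (hax : a ≤ x) (hxb : x ≤ b) :
    (p x ↔ x ≤ a - 1 + ((Finset.Icc a b).filter p).card) := by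
  constructor
  · intro hpx
    have hsub : Finset.Icc a x ⊆ (Finset.Icc a b).filter p := by
      intro y hy
      simp only [Finset.mem_Icc, Finset.mem_filter] at *
      exact ⟨⟨hy.1, le_trans hy.2 hxb⟩, hdc y x hy.1 hy.2 hxb hpx⟩
    have := Finset.card_le_card hsub
    rw [Nat.card_Icc] at this
    omega
  · intro hle
    by_contra hpx
    have hsub : (Finset.Icc a b).filter p ⊆ Finset.Icc a (x - 1) := by
      intro y hy
      simp only [Finset.mem_Icc, Finset.mem_filter] at *
      refine ⟨hy.1.1, ?_⟩
      by_contra hxy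
      exact hpx (hdc x y hax (by omega) hy.1.2 hy.2)
    have := Finset.card_le_card hsub
    rw [Nat.card_Icc] at this
    omega

lemma conj_le_N (P : ℕ → ℕ) (N j : ℕ) : conj P N j ≤ N := by
  unfold conj
  have := Finset.card_le_card (Finset.filter_subset (fun i => j ≤ P i) (Finset.Icc 1 N))
  rw [Nat.card_Icc] at this
  omega

lemma conj_char {P : ℕ → ℕ} (hP : IsPartition P) {N : ℕ} (hN : ∀ i, N < i → P i = 0)
    {t : ℕ} (ht : 1 ≤ t) {i : ℕ} (hi : 1 ≤ i) :
    (t ≤ P i ↔ i ≤ conj P N t) := by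
  by_cases hiN : i ≤ N
  · have := filter_down (a := 1) (b := N) le_rfl (fun i => t ≤ P i)
      (fun x y hx hxy _ hpy => le_trans hpy (part_mono hP hx hxy)) hi hiN
    simpa [conj] using this
  · have hPi : P i = 0 := hN i (by omega)
    have hc := conj_le_N P N t
    constructor <;> intro h <;> omega

lemma conj_ge_s9 {P : ℕ → ℕ} (hP : IsPartition P) {N : ℕ} (hN : ∀ i, N < i → P i = 0)
    {t i : ℕ} (ht : 1 ≤ t) (hi : 1 ≤ i) (h : t ≤ P i) : i ≤ conj P N t :=
  (conj_char hP hN ht hi).mp h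

lemma conj_lt_s9 {P : ℕ → ℕ} (hP : IsPartition P) {N : ℕ} (hN : ∀ i, N < i → P i = 0)
    {t i : ℕ} (ht : 1 ≤ t) (h : P (i + 1) < t) : conj P N t ≤ i := by
  by_contra hc
  have := (conj_char hP hN ht (i := i + 1) (by omega)).mpr (by omega)
  omega

lemma witness_unique {n N : ℕ} {P : ℕ → ℕ} {j₁ j₂ : ℕ}
    (h1 : (P 1 : ℤ) - (n : ℤ) = (conj P N j₁ : ℤ) + (n : ℤ) - (j₁ : ℤ))
    (h2 : (P 1 : ℤ) - (n : ℤ) = (conj P N j₂ : ℤ) + (n : ℤ) - (j₂ : ℤ)) :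
    j₁ = j₂ := by
  rcases le_total j₁ j₂ with h | h
  · have := conj_anti P N h
    omega
  · have := conj_anti P N h
    omega

lemma sharpOp_eq {n N : ℕ} {P : ℕ → ℕ} {j : ℕ} (hj : 1 ≤ j) (hjn : j ≤ n)
    (heq : (P 1 : ℤ) - (n : ℤ) = (conj P N j : ℤ) + (n : ℤ) - (j : ℤ)) :
    sharpOp n N P = sharp P (conj P N j) (rnum n N P j) := by
  have hsing : Singular n N P := ⟨j, hj, hjn, heq⟩
  rw [sharpOp, dif_pos hsing]
  have hspec := hsing.choose_spec
  have : hsing.choose = j := witness_unique hspec.2.2 heq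
  rw [this]

lemma sharpOp_not {n N : ℕ} {P : ℕ → ℕ} (h : ¬ Singular n N P) : sharpOp n N P = P :=
  dif_neg h

lemma sharp_one (P : ℕ → ℕ) (i₀ r : ℕ) (h : i₀ ≠ 1) : sharp P i₀ r 1 = P 1 - r := by
  simp [sharp, Function.update_self, Function.update_of_ne (Ne.symm h)]

lemma sharp_one' (P : ℕ → ℕ) (r : ℕ) : sharp P 1 r 1 = P 1 - r - r := by
  simp [sharp, Function.update_self]

lemma sharp_i₀ (P : ℕ → ℕ) (i₀ r : ℕ) (h : i₀ ≠ 1) : sharp P i₀ r i₀ = P i₀ - r := by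
  simp [sharp, Function.update_of_ne h, Function.update_self]

lemma sharp_other (P : ℕ → ℕ) (i₀ r : ℕ) {i : ℕ} (h1 : i ≠ 1) (h2 : i ≠ i₀) :
    sharp P i₀ r i = P i := by
  simp [sharp, Function.update_of_ne h1, Function.update_of_ne h2]

lemma sharpOp_one_le (n N : ℕ) (Q : ℕ → ℕ) : (sharpOp n N Q) 1 ≤ Q 1 := by
  rw [sharpOp]
  split
  · rename_i h
    by_cases hi : conj Q N h.choose = 1
    · rw [hi, sharp_one']
      omega
    · rw [sharp_one _ _ _ hi]
      omega
  · exact le_rfl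

lemma iter_one_le (n N : ℕ) (Q : ℕ → ℕ) (m : ℕ) : ((sharpOp n N)^[m] Q) 1 ≤ Q 1 := by
  induction m with
  | zero => exact le_rfl
  | succ m ih =>
    rw [Function.iterate_succ_apply']
    exact le_trans (sharpOp_one_le n N _) ih

lemma iter_set (f : (ℕ → ℕ) → (ℕ → ℕ)) (P : ℕ → ℕ) :
    {Q | ∃ m, Q = f^[m] P} = insert P {Q | ∃ m, Q = f^[m] (f P)} := by
  ext Q
  simp only [Set.mem_setOf_eq, Set.mem_insert_iff]
  constructor
  · rintro ⟨m, rfl⟩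
    cases m with
    | zero => left; rfl
    | succ m => right; exact ⟨m, by rw [Function.iterate_succ_apply]⟩
  · rintro (rfl | ⟨m, rfl⟩)
    · exact ⟨0, rfl⟩
    · exact ⟨m + 1, by rw [Function.iterate_succ_apply]⟩

lemma iter_set_fixed (f : (ℕ → ℕ) → (ℕ → ℕ)) (P : ℕ → ℕ) (h : f P = P) :
    {Q | ∃ m, Q = f^[m] P} = {P} := by
  ext Q
  simp only [Set.mem_setOf_eq, Set.mem_singleton_iff]
  constructor
  · rintro ⟨m, rfl⟩
    exact Function.iterate_fixed h m
  · rintro rfl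
    exact ⟨0, rfl⟩

lemma step (n N : ℕ) (hn : 1 ≤ n) (P : ℕ → ℕ) (hP : IsPartition P) (hH : P 2 ≤ n)
    (hN : ∀ i, N < i → P i = 0) (j : ℕ) (hj : 1 ≤ j) (hjn : j ≤ n)
    (heq : (P 1 : ℤ) - (n : ℤ) = (conj P N j : ℤ) + (n : ℤ) - (j : ℤ)) :
    1 ≤ conj P N j ∧ (sharpOp n N P) 1 < P 1 ∧
    ((conj P N j = 1 ∧ ¬ Singular n N (sharpOp n N P)) ∨
     (2 ≤ conj P N j ∧ ∃ j', 1 ≤ j' ∧ j' ≤ n ∧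
       IsPartition (sharpOp n N P) ∧ (sharpOp n N P) 2 ≤ n ∧
       (∀ i, N < i → (sharpOp n N P) i = 0) ∧
       ((sharpOp n N P) 1 : ℤ) - (n : ℤ)
         = (conj (sharpOp n N P) N j' : ℤ) + (n : ℤ) - (j' : ℤ) ∧
       conj (sharpOp n N P) N j' + 1 = conj P N j)) := by
  have hP1 : P 1 + j = conj P N j + 2 * n := by omega
  have hcN : conj P N j ≤ N := conj_le_N P N j
  have hjP1 : j ≤ P 1 := by omega
  have hc1 : 1 ≤ conj P N j := conj_ge_s9 hP hN hj le_rfl hjP1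
  have hN1 : 1 ≤ N := le_trans hc1 hcN
  have hrchar : ∀ t, j ≤ t → t ≤ n →
      (conj P N t = conj P N j ↔ t ≤ j - 1 + rnum n N P j) := by
    intro t htj htn
    have := filter_down (a := j) (b := n) hj (fun t => conj P N t = conj P N j)
      (fun x y hx hxy _ hpy =>
        le_antisymm (conj_anti P N hx) (hpy ▸ conj_anti P N hxy)) htj htn
    simpa [rnum] using this
  have hr1 : 1 ≤ rnum n N P j := by
    have := (hrchar j le_rfl hjn).mp rfl
    omega
  have hrn : j + rnum n N P j ≤ n + 1 := by
    have h1 : rnum n N P j ≤ n + 1 - j := by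
      unfold rnum
      have := Finset.card_le_card
        (Finset.filter_subset (fun r => conj P N r = conj P N j) (Finset.Icc j n))
      rw [Nat.card_Icc] at this
      omega
    omega
  have hso : sharpOp n N P = sharp P (conj P N j) (rnum n N P j) := sharpOp_eq hj hjn heq
  refine ⟨hc1, ?_, ?_⟩
  all_goals by_cases hcase : conj P N j = 1
  -- first prove the needed r value and μ 1 value in case c = 1
  case pos | pos =>
    have hP2 : P 2 < j := by
      by_contra hcon
      have := conj_ge_s9 hP hN hj (i := 2) (by omega) (by omega)
      omega
    have hrval : rnum n N P j = n + 1 - j := by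
      unfold rnum
      rw [Finset.filter_true_of_mem]
      · rw [Nat.card_Icc]
      · intro t ht
        rw [Finset.mem_Icc] at ht
        rw [hcase]
        refine le_antisymm ?_ ?_
        · exact conj_lt_s9 hP hN (by omega) (i := 1) (by show P 2 < t; omega)
        · exact conj_ge_s9 hP hN (by omega) le_rfl (by omega)
    have hμ1 : sharpOp n N P 1 = j - 1 := by
      rw [hso, hcase, sharp_one']
      omega
    first
    | -- goal: μ 1 < P 1
      (rw [hμ1]; omega)
    | -- goal: disjunction
      (left
       refine ⟨hcase, ?_⟩
       rintro ⟨t, ht1, htn, he⟩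
       rw [hμ1] at he
       have : (0 : ℤ) ≤ (conj (sharpOp n N P) N t : ℤ) := by positivity
       omega)
  case neg | neg =>
    have hc2 : 2 ≤ conj P N j := by omega
    have hconjs : conj P N (j - 1 + rnum n N P j) = conj P N j :=
      (hrchar _ (by omega) (by omega)).mpr le_rfl
    have hPc_ge : j - 1 + rnum n N P j ≤ P (conj P N j) :=
      (conj_char hP hN (t := j - 1 + rnum n N P j) (by omega)
        (i := conj P N j) (by omega)).mpr (by omega)
    have hPc_le : P (conj P N j) ≤ j + rnum n N P j - 1 := by
      by_cases hcase2 : j + rnum n N P j ≤ n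
      · have hne : conj P N (j + rnum n N P j) ≠ conj P N j := by
          intro hcontra
          have := (hrchar _ (by omega) hcase2).mp hcontra
          omega
        have hle : conj P N (j + rnum n N P j) ≤ conj P N j := conj_anti P N (by omega)
        have := conj_char hP hN (t := j + rnum n N P j) (by omega)
          (i := conj P N j) (by omega)
        omega
      · have := part_mono hP (a := 2) (b := conj P N j) (by omega) hc2
        omega
    have hPc : P (conj P N j) + 1 = j + rnum n N P j := by omega
    have hPc1 : P (conj P N j + 1) < j := by
      have := conj_char hP hN hj (i := conj P N j + 1) (by omega)
      omega
    have hcne : conj P N j ≠ 1 := by omega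
    have hm1 : sharpOp n N P 1 = P 1 - rnum n N P j := by rw [hso, sharp_one _ _ _ hcne]
    have hmc : sharpOp n N P (conj P N j) = P (conj P N j) - rnum n N P j := by
      rw [hso, sharp_i₀ _ _ _ hcne]
    have hmo : ∀ i, i ≠ 1 → i ≠ conj P N j → sharpOp n N P i = P i := fun i h1 h2 => by
      rw [hso, sharp_other _ _ _ h1 h2]
    first
    | -- goal: μ 1 < P 1
      (rw [hm1]; omega)
    | -- goal: disjunction, right branch
      (right
       have hNμ : ∀ i, N < i → sharpOp n N P i = 0 := fun i hi => by
         rw [hmo i (by omega) (by omega)]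
         exact hN i hi
       have hpart : IsPartition (sharpOp n N P) := by
         constructor
         · rw [hmo 0 (by omega) (by omega)]
           exact hP.1
         · intro i hi
           rcases eq_or_ne i 1 with rfl | hi1
           · rw [hm1]
             have h11 : (1 : ℕ) + 1 = 2 := rfl
             rw [h11]
             rcases eq_or_ne (conj P N j) 2 with h2 | h2
             · rw [show (2 : ℕ) = conj P N j from h2.symm, hmc]
               omega
             · rw [hmo 2 (by omega) (by omega)]
               omega
           rcases eq_or_ne (i + 1) (conj P N j) with hic | hic
           · rw [hic, hmc, hmo i hi1 (by omega)]
             have := part_mono hP (a := i) (b := conj P N j) (by omega) (by omega)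
             omega
           rcases eq_or_ne i (conj P N j) with rfl | hicc
           · rw [hmo _ (by omega) (by omega), hmc]
             omega
           · rw [hmo _ (by omega) hic, hmo _ hi1 hicc]
             exact hP.2 i hi
       have hub : conj (sharpOp n N P) N (j - 1 + rnum n N P j) ≤ conj P N j - 1 := by
         apply conj_lt_s9 hpart hNμ (by omega)
         rw [show conj P N j - 1 + 1 = conj P N j by omega, hmc]
         omega
       have hlb : conj P N j - 1 ≤ conj (sharpOp n N P) N (j - 1 + rnum n N P j) := by
         apply conj_ge_s9 hpart hNμ (by omega) (by omega)
         rcases eq_or_ne (conj P N j) 2 with h2 | h2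
         · rw [show conj P N j - 1 = 1 by omega, hm1]
           omega
         · rw [hmo _ (by omega) (by omega)]
           have := part_mono hP (a := conj P N j - 1) (b := conj P N j) (by omega) (by omega)
           omega
       have hconjμ : conj (sharpOp n N P) N (j - 1 + rnum n N P j) = conj P N j - 1 := by omega
       refine ⟨hc2, j - 1 + rnum n N P j, by omega, by omega, hpart, ?_, hNμ, ?_, by omega⟩
       · rcases eq_or_ne (conj P N j) 2 with h2 | h2
         · rw [show (2 : ℕ) = conj P N j from h2.symm, hmc]
           omega
         · rw [hmo 2 (by omega) (by omega)]
           exact hH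
       · rw [hm1, hconjμ]
         omega)

lemma main_aux (n N : ℕ) (hn : 1 ≤ n) :
    ∀ c : ℕ, ∀ P : ℕ → ℕ, ∀ j : ℕ, IsPartition P → P 2 ≤ n → (∀ i, N < i → P i = 0) →
      1 ≤ j → j ≤ n →
      (P 1 : ℤ) - (n : ℤ) = (conj P N j : ℤ) + (n : ℤ) - (j : ℤ) →
      conj P N j = c + 1 →
      {Q : ℕ → ℕ | ∃ m : ℕ, Q = (sharpOp n N)^[m] P}.Finite ∧
      {Q : ℕ → ℕ | ∃ m : ℕ, Q = (sharpOp n N)^[m] P}.ncard = c + 2 := by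
  intro c
  induction c with
  | zero =>
    intro P j hP hH hN hj hjn heq hc
    obtain ⟨hc1, hlt, hcases⟩ := step n N hn P hP hH hN j hj hjn heq
    rcases hcases with ⟨h1, hns⟩ | ⟨h2, _⟩
    · rw [iter_set, iter_set_fixed _ _ (sharpOp_not hns)]
      have hne : P ∉ ({sharpOp n N P} : Set (ℕ → ℕ)) := by
        intro h
        rw [Set.mem_singleton_iff] at h
        rw [← h] at hlt
        omega
      refine ⟨(Set.finite_singleton _).insert _, ?_⟩
      rw [Set.ncard_insert_of_notMem hne (Set.finite_singleton _), Set.ncard_singleton]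
    · omega
  | succ c ih =>
    intro P j hP hH hN hj hjn heq hc
    obtain ⟨hc1, hlt, hcases⟩ := step n N hn P hP hH hN j hj hjn heq
    rcases hcases with ⟨h1, _⟩ | ⟨h2, j', hj'1, hj'n, hpart, hH', hN', heq', hconj'⟩
    · omega
    · obtain ⟨hfin, hcard⟩ := ih (sharpOp n N P) j' hpart hH' hN' hj'1 hj'n heq' (by omega)
      have hnm : P ∉ {Q : ℕ → ℕ | ∃ m : ℕ, Q = (sharpOp n N)^[m] (sharpOp n N P)} := by
        rintro ⟨m, hm⟩
        have := iter_one_le n N (sharpOp n N P) m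
        rw [← hm] at this
        omega
      rw [iter_set]
      exact ⟨hfin.insert _, by rw [Set.ncard_insert_of_notMem hnm hfin, hcard]⟩

/-- `X_λ = {λ, λ^♯, (λ^♯)^♯, …}` has exactly `λ'_j + 1` elements for singular `λ` with
`λ₁ − n = λ'_j + n − j`. -/
theorem card_X (n : ℕ) (hn : 1 ≤ n) (P : ℕ → ℕ) (hP : IsPartition P)
    (hH : P 2 ≤ n) (N : ℕ) (hN : ∀ i, N < i → P i = 0)
    (j : ℕ) (hj : 1 ≤ j) (hjn : j ≤ n)
    (heq : (P 1 : ℤ) - (n : ℤ) = (conj P N j : ℤ) + (n : ℤ) - (j : ℤ)) :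
    Set.ncard {Q : ℕ → ℕ | ∃ m : ℕ, Q = (sharpOp n N)^[m] P} = conj P N j + 1 := by
  have h1 := (step n N hn P hP hH hN j hj hjn heq).1
  obtain ⟨_, hcard⟩ := main_aux n N hn (conj P N j - 1) P j hP hH hN hj hjn heq (by omega)
  omega
end

section
/- In the group algebra of the weight lattice of osp(2,2n), suppose χ is an integral weight with (χ+ρ, ε+δ_j) = (χ+ρ, ε+δ_{j+1}) = 0 for some 1 ≤ j ≤ n−1. Then {K^{ε+δ_j}_χ} = −{K^{ε+δ_{j+1}}_{χ−ε−δ_{j+1}}}, where for a weight ν and odd positive root α, K^α_ν = e^{ν+ρ₀} Π_{β ∈ R₁⁺ \ {α}} (1 − e^{−β}), and {·} denotes alternation over the Weyl group W₀ = S_n ⋉ (ℤ/2)^n acting by permutations and sign changes of the δ_i. -/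
/-!
Write `α_i = ε + δ_i` and `μ = χ + ρ₀`. Splitting off the factors `1 − e^{−α}` for the two roots
involved, `K^{α_j}_χ + K^{α_{j+1}}_{χ−α_{j+1}}` telescopes to
`(e^μ − e^{μ−α_j−α_{j+1}}) Π_{β ≠ α_j, α_{j+1}} (1 − e^{−β})`. The two vanishing pairings force the
`δ_j`- and `δ_{j+1}`-coordinates of `μ` to agree, so the transposition `s` of `δ_j` and `δ_{j+1}`
fixes `μ`, exchanges `α_j` and `α_{j+1}` and permutes the other odd roots: the sum is `s`-invariant.
Since `{w f} = sgn(w) {f}`, the alternation of an `s`-invariant element is its own negative, hence `0`.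
-/

/-- The integral weight lattice of `osp(2,2n)`: coefficients of `ε` and of `δ₁, …, δ_n`. -/
abbrev Wt (n : ℕ) : Type := ℤ × (Fin n → ℤ)

/-- The group algebra of the weight lattice over `ℂ`. -/
abbrev GA (n : ℕ) : Type := AddMonoidAlgebra ℂ (Wt n)

/-- `e^v` in the group algebra. -/
noncomputable def eWt (n : ℕ) (v : Wt n) : GA n := AddMonoidAlgebra.single v 1

/-- The weight `ε`. -/
def eps (n : ℕ) : Wt n := (1, 0)

/-- The weight `δ_i` (indexing `δ_{i+1}` by `i : Fin n`). -/
def delta (n : ℕ) (i : Fin n) : Wt n := (0, fun r => if r = i then 1 else 0)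

/-- `ρ₀ = Σ_{i=1}^n (n+1−i) δ_i`. -/
def rho0 (n : ℕ) : Wt n := (0, fun i => (n : ℤ) - (i : ℤ))

/-- `ρ = ρ₀ − ρ₁ = ρ₀ − n ε`. -/
def rho (n : ℕ) : Wt n := (-(n : ℤ), fun i => (n : ℤ) - (i : ℤ))

/-- The pairing `(v, ε + δ_i)` for the form `(ε,ε)=1`, `(δ_i,δ_j)=−δ_{ij}`, `(ε,δ_i)=0`. -/
def pairPlus (n : ℕ) (v : Wt n) (i : Fin n) : ℤ := v.1 - v.2 i

/-- The pairing `(v, ε − δ_i)`. -/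
def pairMinus (n : ℕ) (v : Wt n) (i : Fin n) : ℤ := v.1 + v.2 i

/-- The odd positive root attached to `(i, s)`: `ε + δ_i` if `s = true`, `ε − δ_i` otherwise. -/
def oddRoot (n : ℕ) (a : Fin n × Bool) : Wt n :=
  if a.2 then eps n + delta n a.1 else eps n - delta n a.1

/-- The action of the Weyl group element `(σ, s) ∈ S_n ⋉ (ℤ/2)^n` on weights: it fixes `ε` and
permutes and changes signs of the `δ_i`. -/
def wAct (n : ℕ) (σ : Equiv.Perm (Fin n)) (s : Fin n → ℤˣ) (v : Wt n) : Wt n :=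
  (v.1, fun i => (s i : ℤ) * v.2 (σ⁻¹ i))

/-- The alternation `{f} = Σ_{w ∈ W₀} sgn(w) · w(f)` over `W₀ = S_n ⋉ (ℤ/2)^n`. -/
noncomputable def alt (n : ℕ) (f : GA n) : GA n :=
  ∑ σ : Equiv.Perm (Fin n), ∑ s : Fin n → ℤˣ,
    ((((Equiv.Perm.sign σ : ℤ) * ∏ i, (s i : ℤ) : ℤ) : ℂ)) •
      AddMonoidAlgebra.mapDomain (wAct n σ s) f

/-- `K^α_ν = e^{ν+ρ₀} Π_{β ∈ R₁⁺ \ {α}} (1 − e^{−β})`, with `α = oddRoot n a`. -/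
noncomputable def Kal (n : ℕ) (χ : Wt n) (a : Fin n × Bool) : GA n :=
  eWt n (χ + rho0 n) *
    ∏ b ∈ (Finset.univ : Finset (Fin n × Bool)).erase a,
      (1 - eWt n (-(oddRoot n b)))


section WeylAction

variable {n : ℕ}

lemma wAct_add (σ : Equiv.Perm (Fin n)) (s : Fin n → ℤˣ) (u v : Wt n) :
    wAct n σ s (u + v) = wAct n σ s u + wAct n σ s v :=
  Prod.ext rfl (funext fun _ => mul_add _ _ _)

def wActHom (n : ℕ) (σ : Equiv.Perm (Fin n)) (s : Fin n → ℤˣ) : Wt n →+ Wt n :=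
  AddMonoidHom.mk' (wAct n σ s) (wAct_add σ s)

lemma wAct_neg (σ : Equiv.Perm (Fin n)) (s : Fin n → ℤˣ) (v : Wt n) :
    wAct n σ s (-v) = -wAct n σ s v :=
  map_neg (wActHom n σ s) v

lemma wAct_sub (σ : Equiv.Perm (Fin n)) (s : Fin n → ℤˣ) (u v : Wt n) :
    wAct n σ s (u - v) = wAct n σ s u - wAct n σ s v :=
  map_sub (wActHom n σ s) u v

lemma wAct_wAct (σ π : Equiv.Perm (Fin n)) (s t : Fin n → ℤˣ) (v : Wt n) :
    wAct n σ s (wAct n π t v) = wAct n (σ * π) (fun i => s i * t (σ⁻¹ i)) v := by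
  refine Prod.ext rfl (funext fun i => ?_)
  simp only [wAct, mul_inv_rev, Equiv.Perm.mul_apply, Units.val_mul]
  ring

lemma wAct_one_snd (π : Equiv.Perm (Fin n)) (v : Wt n) (i : Fin n) :
    (wAct n π 1 v).2 i = v.2 (π⁻¹ i) := by
  simp [wAct]

lemma wAct_swap_of_eq {i k : Fin n} {v : Wt n} (hv : v.2 i = v.2 k) :
    wAct n (Equiv.swap i k) 1 v = v := by
  refine Prod.ext rfl (funext fun r => ?_)
  rw [wAct_one_snd, Equiv.swap_inv]
  rcases eq_or_ne r i with rfl | hri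
  · rw [Equiv.swap_apply_left, hv]
  rcases eq_or_ne r k with rfl | hrk
  · rw [Equiv.swap_apply_right, hv]
  · rw [Equiv.swap_apply_of_ne_of_ne hri hrk]

lemma wAct_one_eps (π : Equiv.Perm (Fin n)) : wAct n π 1 (eps n) = eps n :=
  Prod.ext rfl (funext fun _ => by simp [wAct, eps])

lemma wAct_one_delta (π : Equiv.Perm (Fin n)) (i : Fin n) :
    wAct n π 1 (delta n i) = delta n (π i) :=
  Prod.ext rfl (funext fun r => by
    simp only [wAct_one_snd, delta, Equiv.Perm.inv_def, Equiv.eq_symm_apply, eq_comm])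

lemma wAct_one_oddRoot (π : Equiv.Perm (Fin n)) (b : Fin n × Bool) :
    wAct n π 1 (oddRoot n b) = oddRoot n (π b.1, b.2) := by
  obtain ⟨i, _ | _⟩ := b <;>
    simp only [oddRoot, if_true, Bool.false_eq_true, if_false, wAct_add, wAct_sub, wAct_one_eps,
      wAct_one_delta]

noncomputable def wActRingHom (n : ℕ) (σ : Equiv.Perm (Fin n)) (s : Fin n → ℤˣ) :
    GA n →+* GA n :=
  AddMonoidAlgebra.mapDomainRingHom ℂ (wActHom n σ s)

lemma wActRingHom_apply (σ : Equiv.Perm (Fin n)) (s : Fin n → ℤˣ) (f : GA n) :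
    wActRingHom n σ s f = AddMonoidAlgebra.mapDomain (wAct n σ s) f :=
  rfl

lemma wActRingHom_eWt (σ : Equiv.Perm (Fin n)) (s : Fin n → ℤˣ) (v : Wt n) :
    wActRingHom n σ s (eWt n v) = eWt n (wAct n σ s v) := by
  simp [wActRingHom_apply, eWt]

end WeylAction

lemma AddMonoidAlgebra.mapDomain_mapDomain {R α β γ : Type*} [Semiring R] (f : β → γ)
    (g : α → β) (x : AddMonoidAlgebra R α) :
    AddMonoidAlgebra.mapDomain f (AddMonoidAlgebra.mapDomain g x)
      = AddMonoidAlgebra.mapDomain (f ∘ g) x := by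
  ext; simp [Finsupp.mapDomain_comp]

section Alternation

variable {n : ℕ}

lemma alt_add (f g : GA n) : alt n (f + g) = alt n f + alt n g := by
  simp only [alt, AddMonoidAlgebra.mapDomain_add, smul_add, Finset.sum_add_distrib]

lemma alt_wActRingHom (π : Equiv.Perm (Fin n)) (t : Fin n → ℤˣ) (f : GA n) :
    alt n (wActRingHom n π t f)
      = (((Equiv.Perm.sign π : ℤ) * ∏ i, (t i : ℤ) : ℤ) : ℂ) • alt n f := by
  set c : ℤˣ := Equiv.Perm.sign π * ∏ i, t i
  have hsign : ∀ (σ : Equiv.Perm (Fin n)) (s : Fin n → ℤˣ),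
      Equiv.Perm.sign σ * ∏ i, s i
        = c * (Equiv.Perm.sign (σ * π) * ∏ i, (s i * t (σ⁻¹ i))) := by
    intro σ s
    have hc : c * c = 1 := Int.units_mul_self c
    rw [Finset.prod_mul_distrib, Equiv.prod_comp σ⁻¹ t, map_mul]
    calc _ = (c * c) * (Equiv.Perm.sign σ * ∏ i, s i) := by rw [hc, one_mul]
      _ = _ := by simp only [c]; ac_rfl
  rw [alt, alt, Finset.smul_sum]
  refine Fintype.sum_equiv (Equiv.mulRight π) _ _ fun σ => ?_
  rw [Finset.smul_sum]
  refine Fintype.sum_equiv (Equiv.mulRight fun i => t (σ⁻¹ i)) _ _ fun s => ?_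
  rw [wActRingHom_apply, AddMonoidAlgebra.mapDomain_mapDomain, smul_smul]
  congr 1
  · have hcoef := congrArg (fun u : ℤˣ => ((u : ℤ) : ℂ)) (hsign σ s)
    simp only [Equiv.coe_mulRight, Pi.mul_apply, c] at hcoef ⊢
    push_cast at hcoef ⊢
    exact hcoef
  · exact congrArg (AddMonoidAlgebra.mapDomain · f) (funext (wAct_wAct σ π s t))

lemma alt_eq_zero_of_wActRingHom_swap_eq {i k : Fin n} (hik : i ≠ k) {f : GA n}
    (hf : wActRingHom n (Equiv.swap i k) 1 f = f) : alt n f = 0 := by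
  have h := alt_wActRingHom (Equiv.swap i k) 1 f
  simp only [hf, Equiv.Perm.sign_swap hik, Pi.one_apply, Units.val_one, Finset.prod_const_one,
    mul_one, Units.val_neg, Int.cast_neg, Int.cast_one, neg_smul, one_smul] at h
  have : IsAddTorsionFree (GA n) := .of_module_rat (GA n)
  exact self_eq_neg.mp h

end Alternation

section OddRoots

variable {n : ℕ}

lemma eWt_add (u v : Wt n) : eWt n (u + v) = eWt n u * eWt n v := by
  simp [eWt, AddMonoidAlgebra.single_mul_single]

lemma eWt_mul_one_sub_eWt_neg (u v : Wt n) :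
    eWt n u * (1 - eWt n (-v)) = eWt n u - eWt n (u - v) := by
  rw [mul_sub, mul_one, ← eWt_add, sub_eq_add_neg u]

lemma wActRingHom_prod_oddRoot (π : Equiv.Perm (Fin n)) {S : Finset (Fin n × Bool)}
    (hS : ∀ b, b ∈ S ↔ (π b.1, b.2) ∈ S) :
    wActRingHom n π 1 (∏ b ∈ S, (1 - eWt n (-oddRoot n b)))
      = ∏ b ∈ S, (1 - eWt n (-oddRoot n b)) := by
  rw [map_prod]
  refine Finset.prod_equiv (Equiv.prodCongr π (Equiv.refl Bool)) hS fun b _ => ?_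
  rw [map_sub, map_one, wActRingHom_eWt, wAct_neg, wAct_one_oddRoot]
  rfl

noncomputable def KalPair (n : ℕ) (μ : Wt n) (j k : Fin n) : GA n :=
  (eWt n μ - eWt n (μ - oddRoot n (j, true) - oddRoot n (k, true))) *
    ∏ b ∈ (Finset.univ.erase (j, true)).erase (k, true), (1 - eWt n (-oddRoot n b))

lemma Kal_add_Kal_sub_oddRoot {j k : Fin n} (hjk : j ≠ k) (χ : Wt n) :
    Kal n χ (j, true) + Kal n (χ - oddRoot n (k, true)) (k, true) = KalPair n (χ + rho0 n) j k := by
  have hk : (k, true) ∈ Finset.univ.erase (j, true) := by simp [hjk.symm]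
  have hj : (j, true) ∈ Finset.univ.erase (k, true) := by simp [hjk]
  rw [Kal, Kal, KalPair, ← Finset.mul_prod_erase _ _ hk, ← Finset.mul_prod_erase _ _ hj,
    Finset.erase_right_comm (a := (k, true)), ← mul_assoc, ← mul_assoc, ← add_mul,
    eWt_mul_one_sub_eWt_neg, eWt_mul_one_sub_eWt_neg, sub_add_eq_add_sub χ, sub_add_sub_cancel,
    sub_right_comm _ (oddRoot n (k, true))]

lemma wActRingHom_swap_KalPair {j k : Fin n} {μ : Wt n} (hμ : μ.2 j = μ.2 k) :
    wActRingHom n (Equiv.swap j k) 1 (KalPair n μ j k) = KalPair n μ j k := by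
  have hS : ∀ b : Fin n × Bool, b ∈ (Finset.univ.erase (j, true)).erase (k, true)
      ↔ (Equiv.swap j k b.1, b.2) ∈ (Finset.univ.erase (j, true)).erase (k, true) := by
    rintro ⟨i, t⟩
    simp only [Finset.mem_erase, Finset.mem_univ, and_true, ne_eq, Prod.mk.injEq,
      Equiv.swap_apply_eq_iff, Equiv.swap_apply_left, Equiv.swap_apply_right]
    tauto
  have hswap : wAct n (Equiv.swap j k) 1 (μ - oddRoot n (j, true) - oddRoot n (k, true))
      = μ - oddRoot n (j, true) - oddRoot n (k, true) := by
    rw [wAct_sub, wAct_sub, wAct_swap_of_eq hμ, wAct_one_oddRoot, wAct_one_oddRoot,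
      Equiv.swap_apply_left, Equiv.swap_apply_right, sub_right_comm]
  rw [KalPair, map_mul, map_sub, wActRingHom_eWt, wActRingHom_eWt, wAct_swap_of_eq hμ, hswap,
    wActRingHom_prod_oddRoot _ hS]

end OddRoots

/-- If `(χ+ρ, ε+δ_j) = (χ+ρ, ε+δ_{j+1}) = 0` then
`{K^{ε+δ_j}_χ} = −{K^{ε+δ_{j+1}}_{χ−ε−δ_{j+1}}}`. -/
theorem alt_Kal_shift (n : ℕ) (χ : Wt n) (j j1 : Fin n)
    (hj1 : (j1 : ℕ) = (j : ℕ) + 1)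
    (h1 : pairPlus n (χ + rho n) j = 0)
    (h2 : pairPlus n (χ + rho n) j1 = 0) :
    alt n (Kal n χ (j, true)) = - alt n (Kal n (χ - eps n - delta n j1) (j1, true)) := by
  have hne : j ≠ j1 := by rintro rfl; omega
  have hμ : (χ + rho0 n).2 j = (χ + rho0 n).2 j1 := by
    simp only [pairPlus, rho, rho0, Prod.fst_add, Prod.snd_add, Pi.add_apply] at h1 h2 ⊢
    omega
  rw [sub_sub, show eps n + delta n j1 = oddRoot n (j1, true) from rfl, eq_neg_iff_add_eq_zero,
    ← alt_add, Kal_add_Kal_sub_oddRoot hne]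
  exact alt_eq_zero_of_wActRingHom_swap_eq hne (wActRingHom_swap_KalPair hμ)
end

section
/- Fix a positive integer n and let λ ∈ H(1,n) with λ₁ > n. Define χ_λ = λ₁ε + Σ_{j=1}^n μ'_j δ_j, where μ is λ with its first row deleted. Then λ is singular (i.e. λ₁ − n = λ'_j + n − j for some 1 ≤ j ≤ n) if and only if χ_λ is atypical, i.e. (χ_λ + ρ, α) = 0 for some odd positive root α ∈ R₁⁺ = {ε ± δ_i}. -/
/-- `μ'_j` for `μ = (λ₂, λ₃, …)`, i.e. the number of rows `i ≥ 2` with `λ_i ≥ j`. -/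
def conjTail (P : ℕ → ℕ) (N : ℕ) (j : ℕ) : ℕ :=
  ((Finset.Icc 2 N).filter (fun i => j ≤ P i)).card

/-- `χ_λ = λ₁ ε + Σ_{j=1}^n μ'_j δ_j`, `μ` being `λ` without its first row. -/
def chiWt (n N : ℕ) (P : ℕ → ℕ) : Wt n :=
  ((P 1 : ℤ), fun i => (conjTail P N ((i : ℕ) + 1) : ℤ))

/-- For `λ ∈ H(1,n)` with `λ₁ > n`: `λ` is singular iff `χ_λ` is atypical, i.e.
`(χ_λ + ρ, α) = 0` for some odd positive root `α ∈ {ε ± δ_i}`. -/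
theorem singular_iff_atypical (n : ℕ) (hn : 1 ≤ n) (P : ℕ → ℕ) (hP : IsPartition P)
    (hH : P 2 ≤ n) (hP1 : n < P 1) (N : ℕ) (hN : ∀ i, N < i → P i = 0) :
    (∃ j, 1 ≤ j ∧ j ≤ n ∧
        (P 1 : ℤ) - (n : ℤ) = (conj P N j : ℤ) + (n : ℤ) - (j : ℤ)) ↔
      (∃ i : Fin n,
        pairPlus n (chiWt n N P + rho n) i = 0 ∨
        pairMinus n (chiWt n N P + rho n) i = 0) := by
  have hN1 : 1 ≤ N := by
    by_contra h
    have := hN 1 (by omega)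
    omega
  have hconj : ∀ j, 1 ≤ j → j ≤ n → (conj P N j : ℤ) = (conjTail P N j : ℤ) + 1 := by
    intro j h1 h2
    have hIcc : Finset.Icc 1 N = insert 1 (Finset.Icc 2 N) := by
      ext x; simp only [Finset.mem_Icc, Finset.mem_insert]; omega
    have hjP : j ≤ P 1 := by omega
    unfold conj conjTail
    rw [hIcc, Finset.filter_insert, if_pos hjP,
      Finset.card_insert_of_notMem (by simp)]
    push_cast; ring
  have hpp : ∀ i : Fin n, pairPlus n (chiWt n N P + rho n) i =
      (P 1 : ℤ) - n - (conjTail P N ((i : ℕ) + 1) : ℤ) - ((n : ℤ) - (i : ℤ)) := by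
    intro i
    simp only [pairPlus, chiWt, rho, Prod.fst_add, Prod.snd_add, Pi.add_apply]
    ring
  have hpm : ∀ i : Fin n, pairMinus n (chiWt n N P + rho n) i =
      (P 1 : ℤ) - n + (conjTail P N ((i : ℕ) + 1) : ℤ) + ((n : ℤ) - (i : ℤ)) := by
    intro i
    simp only [pairMinus, chiWt, rho, Prod.fst_add, Prod.snd_add, Pi.add_apply]
    ring
  constructor
  · rintro ⟨j, hj1, hjn, heq⟩
    refine ⟨⟨j - 1, by omega⟩, Or.inl ?_⟩
    rw [hpp]
    have hc := hconj j hj1 hjn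
    have h1 : (j - 1 : ℕ) + 1 = j := by omega
    simp only [h1]
    have h2 : ((j - 1 : ℕ) : ℤ) = (j : ℤ) - 1 := by omega
    rw [h2]
    omega
  · rintro ⟨i, h | h⟩
    · refine ⟨(i : ℕ) + 1, by omega, by omega, ?_⟩
      rw [hpp] at h
      have hc := hconj ((i : ℕ) + 1) (by omega) (by omega)
      have : ((i : ℕ) : ℤ) < n := by exact_mod_cast i.2
      push_cast at *
      omega
    · exfalso
      rw [hpm] at h
      have : ((i : ℕ) : ℤ) < n := by exact_mod_cast i.2
      have : (0 : ℤ) ≤ (conjTail P N ((i : ℕ) + 1) : ℤ) := by positivity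
      omega
end
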